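/- Let d ≥ 2, ε ∈ (0,1), and let S = {γ₁, …, γ_{2r}} ⊂ SL_d(ℝ) be a symmetric set of pairwise distinct proximal matrices such that both S and the dual set S* are ε-Schottky, and set V = ⋂_{1 ≤ i ≤ 2r} B(γᵢ⁻, ε). Then for every infinite reduced word (xᵢ)_{i∈ℕ} in S there exists a point ξ((xᵢ)) ∈ ℙ(ℝ^d) such that for every v ∈ V, the sequence ((x₀ x₁ ⋯ x_n)(v))_{n∈ℕ} converges to ξ((xᵢ)) in the metric space (ℙ(ℝ^d), dist). -/

import Mathlib

/-!
Ping-pong. A letter `a` of the word contracts the lines at distance `≥ ε` from its repelling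
hyperplane `a⁻` by the factor `ε` and sends them within `ε` of its attracting line `a⁺`. The
Schottky condition keeps that neighbourhood of `a⁺` at distance `≥ ε` from `b⁻` for every
letter `b` that may precede `a` in a reduced word, so the contractions compose: `x₀ ⋯ xₙ`
shrinks distances between lines of `V` by `ε ^ (n + 1)`. Hence the images of one `v₀ ∈ V`
form a geometrically Cauchy sequence with a limit line, and the images of every other
`v ∈ V` follow them to the same limit.
-/

open Polynomial Filter
open scoped Classical

noncomputable section

namespace Amalgam

variable {W : Type*} [NormedAddCommGroup W] [NormedSpace ℝ W]

/-- The distance between two subspaces of a normed space: the infimum of `‖x - y‖` over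
unit vectors `x ∈ X`, `y ∈ Y`.  For one-dimensional subspaces this is the metric on
projective space; for a line and a hyperplane it is the distance from the point of
projective space to the subset of projective space determined by the hyperplane. -/
def sdist (X Y : Submodule ℝ W) : ℝ :=
  sInf {r : ℝ | ∃ x ∈ X, ∃ y ∈ Y, ‖x‖ = 1 ∧ ‖y‖ = 1 ∧ r = ‖x - y‖}

/-- A point of projective space, i.e. a line through the origin. -/
def IsLine (X : Submodule ℝ W) : Prop := Module.finrank ℝ X = 1

/-- The diameter of the projective space of `W`. -/
def projDiam (W : Type*) [NormedAddCommGroup W] [NormedSpace ℝ W] : ℝ :=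
  sSup {t : ℝ | ∃ X Y : Submodule ℝ W, IsLine X ∧ IsLine Y ∧ t = sdist X Y}

variable [FiniteDimensional ℝ W]

/-- `f` is proximal: its characteristic polynomial has a unique complex root of maximal
modulus, and this root is real with multiplicity one. -/
def IsProximal (f : W →ₗ[ℝ] W) : Prop :=
  ∃ lam : ℝ,
    (Polynomial.map (algebraMap ℝ ℂ) (LinearMap.charpoly f)).roots.count (lam : ℂ) = 1 ∧
    ∀ μ ∈ (Polynomial.map (algebraMap ℝ ℂ) (LinearMap.charpoly f)).roots,
      μ ≠ (lam : ℂ) → ‖μ‖ < |lam|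

/-- The top eigenvalue of a proximal transformation (junk value `0` otherwise). -/
def topEig (f : W →ₗ[ℝ] W) : ℝ :=
  if h : IsProximal f then h.choose else 0

/-- The attracting eigenline `γ⁺` of a proximal transformation: the eigenspace of the
eigenvalue of maximal modulus. -/
def attLine (f : W →ₗ[ℝ] W) : Submodule ℝ W :=
  LinearMap.ker (f - topEig f • LinearMap.id)

/-- The repelling hyperplane `γ⁻` of a proximal transformation: the unique invariant
complement of the attracting line. -/
def repHyp (f : W →ₗ[ℝ] W) : Submodule ℝ W :=
  if h : ∃ H : Submodule ℝ W, Submodule.map f H ≤ H ∧ IsCompl (attLine f) H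
  then h.choose else ⊥

/-- `f` is `ε`-proximal: it is proximal, `dist(γ⁺, γ⁻) ≥ 2ε`, the induced action on
projective space is `ε`-Lipschitz on `B(γ⁻, ε)`, and maps `B(γ⁻, ε)` into `b(γ⁺, ε)`. -/
def IsEpsProximal (ε : ℝ) (f : W →ₗ[ℝ] W) : Prop :=
  IsProximal f ∧
  2 * ε ≤ sdist (attLine f) (repHyp f) ∧
  (∀ X Y : Submodule ℝ W, IsLine X → IsLine Y →
      ε ≤ sdist X (repHyp f) → ε ≤ sdist Y (repHyp f) →
      sdist (X.map f) (Y.map f) ≤ ε * sdist X Y) ∧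
  (∀ X : Submodule ℝ W, IsLine X → ε ≤ sdist X (repHyp f) →
      ε ≥ sdist (X.map f) (attLine f))

/-- An indexed family `f` (with `g i` playing the role of `(f i)⁻¹`) is `ε`-Schottky:
each member is `ε`-proximal and `dist((fᵢ)⁺, (fⱼ⁻¹)⁻) ≥ 6ε` for `i ≠ j`. -/
def IsSchottkyFam {ι : Type*} (ε : ℝ) (f g : ι → (W →ₗ[ℝ] W)) : Prop :=
  (∀ i, IsEpsProximal ε (f i)) ∧
  ∀ i j, i ≠ j → 6 * ε ≤ sdist (attLine (f i)) (repHyp (g j))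


abbrev E (d : ℕ) := EuclideanSpace ℝ (Fin d)
abbrev SL (d : ℕ) := Matrix.SpecialLinearGroup (Fin d) ℝ
abbrev Dual' (d : ℕ) := StrongDual ℝ (E d)

/-- The linear endomorphism of Euclidean space determined by a matrix in `SL_d(ℝ)`. -/
def toEnd {d : ℕ} (g : SL d) : E d →ₗ[ℝ] E d :=
  Matrix.toEuclideanLin (g : Matrix (Fin d) (Fin d) ℝ)

/-- The same map as a continuous linear map. -/
def toCLM {d : ℕ} (g : SL d) : E d →L[ℝ] E d :=
  LinearMap.toContinuousLinearMap (toEnd g)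

/-- The dual transformation `γ* : θ ↦ θ ∘ γ⁻¹` acting on the dual space `(ℝ^d)*`
(equipped with the dual norm). -/
def dualEnd {d : ℕ} (g : SL d) : Dual' d →ₗ[ℝ] Dual' d where
  toFun θ := θ.comp (toCLM g⁻¹)
  map_add' θ₁ θ₂ := by ext v; simp
  map_smul' c θ := by ext v; simp

/-- The kernel of a set of functionals: `{v : φ(v) = 0 for all φ ∈ Y}`. -/
def dualKer {d : ℕ} (Y : Submodule ℝ (Dual' d)) : Submodule ℝ (E d) where
  carrier := {v | ∀ φ ∈ Y, φ v = 0}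
  add_mem' := by
    intro a b ha hb φ hφ
    simp [map_add, ha φ hφ, hb φ hφ]
  zero_mem' := by intro φ hφ; simp
  smul_mem' := by
    intro c a ha φ hφ
    simp [ha φ hφ]

/-- The annihilator of a subspace inside the dual space. -/
def annih {d : ℕ} (U : Submodule ℝ (E d)) : Submodule ℝ (Dual' d) where
  carrier := {φ | ∀ v ∈ U, φ v = 0}
  add_mem' := by
    intro a b ha hb v hv
    simp [ha v hv, hb v hv]
  zero_mem' := by intro v hv; simp
  smul_mem' := by
    intro c a ha v hv
    simp [ha v hv]

/-- The operator norm of `g ∈ SL_d(ℝ)` (with respect to the Euclidean norm). -/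
def opN {d : ℕ} (g : SL d) : ℝ := ‖toCLM g‖

/-- The second compound matrix of a `d × d` matrix: the matrix of `2 × 2` minors,
indexed by increasingly ordered pairs. -/
def compound2 {d : ℕ} (g : Matrix (Fin d) (Fin d) ℝ) :
    Matrix {p : Fin d × Fin d // p.1 < p.2} {p : Fin d × Fin d // p.1 < p.2} ℝ :=
  fun p q => g p.1.1 q.1.1 * g p.1.2 q.1.2 - g p.1.1 q.1.2 * g p.1.2 q.1.1

/-- The operator norm of the second compound matrix (Euclidean norms). -/
def c2norm {d : ℕ} (g : Matrix (Fin d) (Fin d) ℝ) : ℝ :=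
  ‖LinearMap.toContinuousLinearMap (Matrix.toEuclideanLin (compound2 g))‖


/-- A reduced word in the set `S`: a nonempty finite sequence of elements of `S` in which
no letter is followed by its inverse. -/
def IsReducedWord {d : ℕ} (S : Set (SL d)) (w : List (SL d)) : Prop :=
  w ≠ [] ∧ (∀ a ∈ w, a ∈ S) ∧ List.Chain' (fun a b => b ≠ a⁻¹) w

/-- An infinite reduced word in the set `S`. -/
def IsInfReducedWord {d : ℕ} (S : Set (SL d)) (x : ℕ → SL d) : Prop :=
  (∀ i, x i ∈ S) ∧ ∀ i, x (i + 1) ≠ (x i)⁻¹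

/-- The partial product `x₀ x₁ ⋯ x_n` of an infinite word. -/
def wordProd {d : ℕ} (x : ℕ → SL d) (n : ℕ) : SL d :=
  ((List.range (n + 1)).map x).prod

/-- A family of matrices is symmetric if it is closed under inverses. -/
def SymmFam {ι : Type*} {d : ℕ} (γ : ι → SL d) : Prop :=
  ∀ i, ∃ j, γ j = (γ i)⁻¹

/-- The family `γ` is `ε`-Schottky as acting on `ℙ(ℝ^d)`. -/
def PrimalSchottky {ι : Type*} {d : ℕ} (ε : ℝ) (γ : ι → SL d) : Prop :=
  IsSchottkyFam ε (fun i => toEnd (γ i)) (fun i => toEnd ((γ i)⁻¹))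

/-- The dual family `γ*` is `ε`-Schottky as acting on `ℙ((ℝ^d)*)`. -/
def DualSchottky {ι : Type*} {d : ℕ} (ε : ℝ) (γ : ι → SL d) : Prop :=
  IsSchottkyFam ε (fun i => dualEnd (γ i)) (fun i => dualEnd ((γ i)⁻¹))

/-- `g` is biproximal: both `g` and `g⁻¹` are proximal. -/
def IsBiproximal {d : ℕ} (g : SL d) : Prop :=
  IsProximal (toEnd g) ∧ IsProximal (toEnd g⁻¹)

/-- A symmetric family of pairwise distinct biproximal matrices is well-positioned if the
attracting lines are pairwise distinct and `γᵢ⁺ ⊄ γⱼ⁻` whenever `γⱼ ≠ γᵢ⁻¹`. -/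
def WellPositioned {ι : Type*} {d : ℕ} (γ : ι → SL d) : Prop :=
  (∀ i, IsBiproximal (γ i)) ∧
  (∀ i j, i ≠ j → attLine (toEnd (γ i)) ≠ attLine (toEnd (γ j))) ∧
  (∀ i j, γ j ≠ (γ i)⁻¹ → ¬ attLine (toEnd (γ i)) ≤ repHyp (toEnd (γ j)))

/-- The spectral radius: maximal modulus of the complex roots of the characteristic
polynomial. -/
def specRad {W : Type*} [NormedAddCommGroup W] [NormedSpace ℝ W] [FiniteDimensional ℝ W]
    (f : W →ₗ[ℝ] W) : ℝ :=
  sSup {t : ℝ | ∃ μ ∈ (Polynomial.map (algebraMap ℝ ℂ) (LinearMap.charpoly f)).roots,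
      t = ‖μ‖}

end Amalgam

namespace Amalgam

section ProjectiveDistance

variable {W : Type*} [NormedAddCommGroup W] [NormedSpace ℝ W]

lemma sdist_nonneg (X Y : Submodule ℝ W) : 0 ≤ sdist X Y :=
  Real.sInf_nonneg (by rintro r ⟨x, -, y, -, -, -, rfl⟩; positivity)

lemma sdist_le_norm_sub {X Y : Submodule ℝ W} {x y : W} (hx : x ∈ X) (hy : y ∈ Y)
    (h1 : ‖x‖ = 1) (h2 : ‖y‖ = 1) : sdist X Y ≤ ‖x - y‖ :=
  csInf_le ⟨0, by rintro r ⟨a, -, b, -, -, -, rfl⟩; positivity⟩ ⟨x, hx, y, hy, h1, h2, rfl⟩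

lemma sdist_comm (X Y : Submodule ℝ W) : sdist X Y = sdist Y X := by
  unfold sdist
  congr 1
  ext r
  constructor <;> rintro ⟨x, hx, y, hy, h1, h2, rfl⟩ <;>
    exact ⟨y, hy, x, hx, h2, h1, norm_sub_rev _ _⟩

lemma sdist_le_two {X Y : Submodule ℝ W} (hX : ∃ x ∈ X, ‖x‖ = 1) (hY : ∃ y ∈ Y, ‖y‖ = 1) :
    sdist X Y ≤ 2 := by
  obtain ⟨x, hx, hx1⟩ := hX
  obtain ⟨y, hy, hy1⟩ := hY
  calc sdist X Y ≤ ‖x - y‖ := sdist_le_norm_sub hx hy hx1 hy1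
    _ ≤ ‖x‖ + ‖y‖ := norm_sub_le x y
    _ = 2 := by rw [hx1, hy1]; norm_num

/-- With no unit vectors on one side the defining set is empty and `sdist` takes the junk
value `sInf ∅ = 0`. -/
lemma exists_norm_eq_one_of_sdist_pos {X Y : Submodule ℝ W} (h : 0 < sdist X Y) :
    (∃ x ∈ X, ‖x‖ = 1) ∧ ∃ y ∈ Y, ‖y‖ = 1 := by
  by_contra hne
  have hempty : {r : ℝ | ∃ x ∈ X, ∃ y ∈ Y, ‖x‖ = 1 ∧ ‖y‖ = 1 ∧ r = ‖x - y‖} = ∅ :=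
    Set.eq_empty_of_forall_notMem fun _ ⟨x, hx, y, hy, hx1, hy1, _⟩ =>
      hne ⟨⟨x, hx, hx1⟩, y, hy, hy1⟩
  rw [sdist, hempty, Real.sInf_empty] at h
  exact h.false

lemma IsLine.exists_norm_eq_one {X : Submodule ℝ W} (hX : IsLine X) : ∃ x ∈ X, ‖x‖ = 1 := by
  obtain ⟨x, hx, hx0⟩ := (Submodule.ne_bot_iff X).mp fun h => by
    rw [IsLine, h, finrank_bot] at hX
    exact zero_ne_one hX
  exact ⟨‖x‖⁻¹ • x, X.smul_mem _ hx, norm_smul_inv_norm hx0⟩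

lemma IsLine.map_of_injective {W' : Type*} [NormedAddCommGroup W'] [NormedSpace ℝ W']
    {X : Submodule ℝ W} (hX : IsLine X) {f : W →ₗ[ℝ] W'} (hf : Function.Injective f) :
    IsLine (X.map f) :=
  (X.equivMapOfInjective f hf).finrank_eq.symm.trans hX

lemma IsLine.eq_or_eq_neg {X : Submodule ℝ W} (hX : IsLine X) {x y : W} (hx : x ∈ X)
    (hy : y ∈ X) (hx1 : ‖x‖ = 1) (hy1 : ‖y‖ = 1) : y = x ∨ y = -x := by
  have hx0 : (⟨x, hx⟩ : X) ≠ 0 := fun h => by simp_all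
  obtain ⟨c, hc⟩ := (finrank_eq_one_iff_of_nonzero' _ hx0).mp hX ⟨y, hy⟩
  have hcy : c • x = y := congrArg Subtype.val hc
  rw [← hcy, norm_smul, hx1, mul_one, Real.norm_eq_abs] at hy1
  rcases abs_eq zero_le_one |>.mp hy1 with rfl | rfl
  · exact Or.inl (by rw [← hcy, one_smul])
  · exact Or.inr (by rw [← hcy, neg_one_smul])

lemma IsLine.exists_norm_sub_le_sdist {X Y : Submodule ℝ W} (hX : IsLine X) (hY : IsLine Y)
    {x : W} (hx : x ∈ X) (hx1 : ‖x‖ = 1) : ∃ y ∈ Y, ‖y‖ = 1 ∧ ‖x - y‖ ≤ sdist X Y := by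
  obtain ⟨y, hy, hy1⟩ := hY.exists_norm_eq_one
  have hmin : min ‖x - y‖ ‖x - -y‖ ≤ sdist X Y := by
    refine le_csInf ⟨_, x, hx, y, hy, hx1, hy1, rfl⟩ ?_
    rintro r ⟨x', hx', y', hy', hx'1, hy'1, rfl⟩
    rcases hX.eq_or_eq_neg hx hx' hx1 hx'1 with rfl | rfl <;>
      rcases hY.eq_or_eq_neg hy hy' hy1 hy'1 with rfl | rfl
    · exact min_le_left _ _
    · exact min_le_right _ _
    · exact (min_le_right _ _).trans_eq (by rw [← norm_neg]; congr 1; abel)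
    · exact (min_le_left _ _).trans_eq (by rw [← norm_neg]; congr 1; abel)
  rcases min_choice ‖x - y‖ ‖x - -y‖ with h | h
  · exact ⟨y, hy, hy1, h ▸ hmin⟩
  · exact ⟨-y, Y.neg_mem hy, by rw [norm_neg, hy1], h ▸ hmin⟩

lemma sdist_triangle {X Y Z : Submodule ℝ W} (hY : IsLine Y) (hX : ∃ x ∈ X, ‖x‖ = 1)
    (hZ : ∃ z ∈ Z, ‖z‖ = 1) : sdist X Z ≤ sdist X Y + sdist Y Z := by
  obtain ⟨y₀, hy₀, hy₀1⟩ := hY.exists_norm_eq_one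
  obtain ⟨x₀, hx₀, hx₀1⟩ := hX
  obtain ⟨z₀, hz₀, hz₀1⟩ := hZ
  have hbound : ∀ x ∈ X, ∀ y ∈ Y, ∀ y' ∈ Y, ∀ z ∈ Z, ‖x‖ = 1 → ‖y‖ = 1 → ‖y'‖ = 1 → ‖z‖ = 1 →
      sdist X Z ≤ ‖x - y‖ + ‖y' - z‖ := by
    intro x hx y hy y' hy' z hz hx1 hy1 hy'1 hz1
    rcases hY.eq_or_eq_neg hy hy' hy1 hy'1 with rfl | rfl
    · exact (sdist_le_norm_sub hx hz hx1 hz1).trans (norm_sub_le_norm_sub_add_norm_sub x y' z)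
    · calc sdist X Z ≤ ‖x - -z‖ := sdist_le_norm_sub hx (Z.neg_mem hz) hx1 (by rwa [norm_neg])
        _ ≤ ‖x - y‖ + ‖y - -z‖ := norm_sub_le_norm_sub_add_norm_sub x y (-z)
        _ = ‖x - y‖ + ‖-y - z‖ := by rw [← norm_neg (y - -z)]; congr 2; abel
  have hYZ : sdist X Z - sdist X Y ≤ sdist Y Z := by
    refine le_csInf ⟨_, y₀, hy₀, z₀, hz₀, hy₀1, hz₀1, rfl⟩ ?_
    rintro b ⟨y', hy', z, hz, hy'1, hz1, rfl⟩
    suffices sdist X Z - ‖y' - z‖ ≤ sdist X Y by linarith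
    refine le_csInf ⟨_, x₀, hx₀, y₀, hy₀, hx₀1, hy₀1, rfl⟩ ?_
    rintro a ⟨x, hx, y, hy, hx1, hy1, rfl⟩
    linarith [hbound x hx y hy y' hy' z hz hx1 hy1 hy'1 hz1]
  linarith

lemma le_sdist_of_sdist_le {ε : ℝ} (hε : 0 < ε) {z A H : Submodule ℝ W} (hz : IsLine z)
    (hzA : sdist z A ≤ ε) (hAH : 2 * ε ≤ sdist A H) : ε ≤ sdist z H := by
  obtain ⟨hA, hH⟩ := exists_norm_eq_one_of_sdist_pos (by linarith : 0 < sdist A H)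
  have := sdist_triangle hz hA hH
  rw [sdist_comm A z] at this
  linarith

/-- Unit vectors can be chosen coherently along the sequence of lines, each within
`sdist` of the previous one; they then form a Cauchy sequence. -/
lemma exists_tendsto_sdist_of_sdist_succ_le [CompleteSpace W] {C ρ : ℝ} (hρ : ρ < 1)
    {y : ℕ → Submodule ℝ W} (hy : ∀ n, IsLine (y n))
    (hsucc : ∀ n, sdist (y n) (y (n + 1)) ≤ C * ρ ^ n) :
    ∃ L : Submodule ℝ W, IsLine L ∧ Tendsto (fun n => sdist (y n) L) atTop (nhds 0) := by
  have hstep : ∀ n (p : {e : W // e ∈ y n ∧ ‖e‖ = 1}),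
      ∃ q : {e : W // e ∈ y (n + 1) ∧ ‖e‖ = 1}, ‖p.1 - q.1‖ ≤ C * ρ ^ n := by
    rintro n ⟨e, he, he1⟩
    obtain ⟨q, hq, hq1, hle⟩ := (hy n).exists_norm_sub_le_sdist (hy (n + 1)) he he1
    exact ⟨⟨q, hq, hq1⟩, hle.trans (hsucc n)⟩
  choose next hnext using hstep
  obtain ⟨e₀, he₀, he₀1⟩ := (hy 0).exists_norm_eq_one
  let seq : ∀ n, {e : W // e ∈ y n ∧ ‖e‖ = 1} := fun n => Nat.rec ⟨e₀, he₀, he₀1⟩ next n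
  have hcauchy : CauchySeq fun n => (seq n).1 :=
    cauchySeq_of_le_geometric ρ C hρ fun n => by
      rw [dist_eq_norm]; exact hnext n (seq n)
  obtain ⟨l, hl⟩ := cauchySeq_tendsto_of_complete hcauchy
  have hl1 : ‖l‖ = 1 :=
    tendsto_nhds_unique hl.norm (by simp only [fun n => (seq n).2.2]; exact tendsto_const_nhds)
  have hl0 : l ≠ 0 := by rintro rfl; simp at hl1
  refine ⟨ℝ ∙ l, finrank_span_singleton hl0, squeeze_zero (fun n => sdist_nonneg _ _)
    (fun n => sdist_le_norm_sub (seq n).2.1 (Submodule.mem_span_singleton_self l) (seq n).2.2 hl1)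
    ?_⟩
  exact tendsto_iff_norm_sub_tendsto_zero.mp hl

end ProjectiveDistance
section SpecialLinear

variable {d : ℕ}

lemma toEnd_mul (g h : SL d) : toEnd (g * h) = toEnd g ∘ₗ toEnd h := by
  simp [toEnd]

lemma toEnd_one : toEnd (1 : SL d) = LinearMap.id := by
  simp [toEnd]

lemma toEnd_injective (g : SL d) : Function.Injective (toEnd g) :=
  Function.LeftInverse.injective (g := toEnd g⁻¹) fun v => by
    rw [← LinearMap.comp_apply, ← toEnd_mul, inv_mul_cancel, toEnd_one, LinearMap.id_apply]

lemma IsLine.map_toEnd {X : Submodule ℝ (E d)} (hX : IsLine X) (g : SL d) :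
    IsLine (X.map (toEnd g)) :=
  hX.map_of_injective (toEnd_injective g)

lemma exists_isLine (hd : 0 < d) : ∃ L : Submodule ℝ (E d), IsLine L := by
  have : Nonempty (Fin d) := ⟨⟨0, hd⟩⟩
  obtain ⟨v, hv⟩ := exists_ne (0 : E d)
  exact ⟨ℝ ∙ v, finrank_span_singleton hv⟩

lemma wordProd_zero (x : ℕ → SL d) : wordProd x 0 = x 0 := by
  simp [wordProd]

lemma map_wordProd_succ (x : ℕ → SL d) (n : ℕ) (v : Submodule ℝ (E d)) :
    v.map (toEnd (wordProd x (n + 1))) = (v.map (toEnd (x (n + 1)))).map (toEnd (wordProd x n)) := by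
  rw [wordProd, List.range_succ, List.map_append, List.prod_append, ← wordProd]
  simp [toEnd_mul, Submodule.map_comp]

lemma map_wordProd_succ' (x : ℕ → SL d) (n : ℕ) (v : Submodule ℝ (E d)) :
    v.map (toEnd (wordProd x (n + 1))) =
      (v.map (toEnd (wordProd (fun k => x (k + 1)) n))).map (toEnd (x 0)) := by
  rw [wordProd, wordProd, List.range_succ_eq_map]
  simp [List.map_map, Function.comp_def, toEnd_mul, Submodule.map_comp]

end SpecialLinear

section Schottky

variable {d : ℕ} {ι : Type*} {ε : ℝ} {γ : ι → SL d}

lemma IsInfReducedWord.tail {S : Set (SL d)} {x : ℕ → SL d} (hx : IsInfReducedWord S x) :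
    IsInfReducedWord S fun k => x (k + 1) :=
  ⟨fun i => hx.1 (i + 1), fun i => hx.2 (i + 1)⟩

lemma IsInfReducedWord.le_sdist_repHyp {x : ℕ → SL d} (hx : IsInfReducedWord (Set.range γ) x)
    {v : Submodule ℝ (E d)} (hv : ∀ i, ε ≤ sdist v (repHyp (toEnd (γ i)))) (n : ℕ) :
    ε ≤ sdist v (repHyp (toEnd (x n))) := by
  obtain ⟨i, hi⟩ := hx.1 n
  exact hi ▸ hv i

lemma PrimalSchottky.isEpsProximal (hS : PrimalSchottky ε γ) {a : SL d}
    (ha : a ∈ Set.range γ) : IsEpsProximal ε (toEnd a) := by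
  obtain ⟨i, rfl⟩ := ha
  exact hS.1 i

lemma PrimalSchottky.six_mul_le_sdist (hsym : SymmFam γ) (hS : PrimalSchottky ε γ)
    {a b : SL d} (ha : a ∈ Set.range γ) (hb : b ∈ Set.range γ) (hab : a ≠ b⁻¹) :
    6 * ε ≤ sdist (attLine (toEnd a)) (repHyp (toEnd b)) := by
  obtain ⟨i, rfl⟩ := ha
  obtain ⟨j, rfl⟩ := hb
  obtain ⟨j', hj'⟩ := hsym j
  have hij : i ≠ j' := by rintro rfl; exact hab hj'
  simpa only [hj', inv_inv] using hS.2 i j' hij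

lemma PrimalSchottky.le_sdist_repHyp_of_sdist_attLine_le (hε : 0 < ε) (hsym : SymmFam γ)
    (hS : PrimalSchottky ε γ) {a b : SL d} (ha : a ∈ Set.range γ) (hb : b ∈ Set.range γ)
    (hab : a ≠ b⁻¹) {z : Submodule ℝ (E d)} (hz : IsLine z)
    (hza : sdist z (attLine (toEnd a)) ≤ ε) : ε ≤ sdist z (repHyp (toEnd b)) :=
  le_sdist_of_sdist_le hε hz hza (by linarith [hS.six_mul_le_sdist hsym ha hb hab])

variable (hε : 0 < ε) (hsym : SymmFam γ) (hS : PrimalSchottky ε γ)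
include hε hsym hS

lemma sdist_map_wordProd_attLine_le (n : ℕ) {x : ℕ → SL d}
    (hx : IsInfReducedWord (Set.range γ) x) {u : Submodule ℝ (E d)} (hu : IsLine u)
    (huf : ε ≤ sdist u (repHyp (toEnd (x n)))) :
    sdist (u.map (toEnd (wordProd x n))) (attLine (toEnd (x 0))) ≤ ε := by
  induction n generalizing x with
  | zero => rw [wordProd_zero]; exact (hS.isEpsProximal (hx.1 0)).2.2.2 u hu huf
  | succ n ih =>
    rw [map_wordProd_succ']
    refine (hS.isEpsProximal (hx.1 0)).2.2.2 _ (hu.map_toEnd _) ?_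
    exact hS.le_sdist_repHyp_of_sdist_attLine_le hε hsym (hx.1 1) (hx.1 0) (hx.2 0)
      (hu.map_toEnd _) (ih hx.tail huf)

lemma sdist_map_wordProd_le (n : ℕ) {x : ℕ → SL d}
    (hx : IsInfReducedWord (Set.range γ) x) {u u' : Submodule ℝ (E d)}
    (hu : IsLine u) (hu' : IsLine u')
    (huf : ε ≤ sdist u (repHyp (toEnd (x n)))) (hu'f : ε ≤ sdist u' (repHyp (toEnd (x n)))) :
    sdist (u.map (toEnd (wordProd x n))) (u'.map (toEnd (wordProd x n))) ≤
      ε ^ (n + 1) * sdist u u' := by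
  induction n generalizing x with
  | zero =>
    rw [wordProd_zero, zero_add, pow_one]
    exact (hS.isEpsProximal (hx.1 0)).2.2.1 u u' hu hu' huf hu'f
  | succ n ih =>
    have hfar : ∀ {w : Submodule ℝ (E d)}, IsLine w → ε ≤ sdist w (repHyp (toEnd (x (n + 1)))) →
        ε ≤ sdist (w.map (toEnd (wordProd (fun k => x (k + 1)) n))) (repHyp (toEnd (x 0))) :=
      fun hw hwf => hS.le_sdist_repHyp_of_sdist_attLine_le hε hsym (hx.1 1) (hx.1 0) (hx.2 0)
        (hw.map_toEnd _) (sdist_map_wordProd_attLine_le hε hsym hS n hx.tail hw hwf)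
    rw [map_wordProd_succ', map_wordProd_succ']
    calc _ ≤ ε * sdist (u.map (toEnd (wordProd (fun k => x (k + 1)) n)))
          (u'.map (toEnd (wordProd (fun k => x (k + 1)) n))) :=
          (hS.isEpsProximal (hx.1 0)).2.2.1 _ _ (hu.map_toEnd _) (hu'.map_toEnd _)
            (hfar hu huf) (hfar hu' hu'f)
      _ ≤ ε * (ε ^ (n + 1) * sdist u u') := by gcongr; exact ih hx.tail huf hu'f
      _ = ε ^ (n + 1 + 1) * sdist u u' := by ring

lemma exists_tendsto_sdist_map_wordProd (hε1 : ε < 1) {x : ℕ → SL d}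
    (hx : IsInfReducedWord (Set.range γ) x) {v : Submodule ℝ (E d)} (hv : IsLine v)
    (hvV : ∀ i, ε ≤ sdist v (repHyp (toEnd (γ i)))) :
    ∃ L : Submodule ℝ (E d), IsLine L ∧
      Tendsto (fun n => sdist (v.map (toEnd (wordProd x n))) L) atTop (nhds 0) := by
  refine exists_tendsto_sdist_of_sdist_succ_le (C := 2 * ε) hε1 (fun n => hv.map_toEnd _)
    fun n => ?_
  have hw : IsLine (v.map (toEnd (x (n + 1)))) := hv.map_toEnd _
  have hwf : ε ≤ sdist (v.map (toEnd (x (n + 1)))) (repHyp (toEnd (x n))) :=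
    hS.le_sdist_repHyp_of_sdist_attLine_le hε hsym (hx.1 (n + 1)) (hx.1 n) (hx.2 n) hw
      ((hS.isEpsProximal (hx.1 (n + 1))).2.2.2 v hv (hx.le_sdist_repHyp hvV (n + 1)))
  rw [map_wordProd_succ]
  calc _ ≤ ε ^ (n + 1) * sdist v (v.map (toEnd (x (n + 1)))) :=
        sdist_map_wordProd_le hε hsym hS n hx hv hw (hx.le_sdist_repHyp hvV n) hwf
    _ ≤ ε ^ (n + 1) * 2 := by
        gcongr; exact sdist_le_two hv.exists_norm_eq_one hw.exists_norm_eq_one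
    _ = 2 * ε * ε ^ n := by ring

lemma tendsto_sdist_map_wordProd_of_tendsto (hε1 : ε < 1) {x : ℕ → SL d}
    (hx : IsInfReducedWord (Set.range γ) x) {v v₀ L : Submodule ℝ (E d)}
    (hv : IsLine v) (hv₀ : IsLine v₀) (hL : IsLine L)
    (hvV : ∀ i, ε ≤ sdist v (repHyp (toEnd (γ i))))
    (hv₀V : ∀ i, ε ≤ sdist v₀ (repHyp (toEnd (γ i))))
    (hv₀L : Tendsto (fun n => sdist (v₀.map (toEnd (wordProd x n))) L) atTop (nhds 0)) :
    Tendsto (fun n => sdist (v.map (toEnd (wordProd x n))) L) atTop (nhds 0) := by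
  have hgeom : Tendsto (fun n : ℕ => ε ^ (n + 1) * 2) atTop (nhds 0) := by
    simpa using ((tendsto_pow_atTop_nhds_zero_of_lt_one hε.le hε1).comp
      (tendsto_add_atTop_nat 1)).mul_const 2
  refine squeeze_zero (fun n => sdist_nonneg _ _) (fun n => ?_) (by simpa using hgeom.add hv₀L)
  calc _ ≤ sdist (v.map (toEnd (wordProd x n))) (v₀.map (toEnd (wordProd x n))) +
        sdist (v₀.map (toEnd (wordProd x n))) L :=
        sdist_triangle (hv₀.map_toEnd _) (hv.map_toEnd _).exists_norm_eq_one
          hL.exists_norm_eq_one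
    _ ≤ ε ^ (n + 1) * sdist v v₀ + sdist (v₀.map (toEnd (wordProd x n))) L := by
        gcongr
        exact sdist_map_wordProd_le hε hsym hS n hx hv hv₀ (hx.le_sdist_repHyp hvV n)
          (hx.le_sdist_repHyp hv₀V n)
    _ ≤ ε ^ (n + 1) * 2 + sdist (v₀.map (toEnd (wordProd x n))) L := by
        gcongr; exact sdist_le_two hv.exists_norm_eq_one hv₀.exists_norm_eq_one

end Schottky

theorem statement7_general (d r : ℕ) (hd : 2 ≤ d) (ε : ℝ) (hε : ε ∈ Set.Ioo (0 : ℝ) 1)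
    (γ : Fin (2 * r) → SL d) (hsym : SymmFam γ)
    (hS : PrimalSchottky ε γ)
    (x : ℕ → SL d) (hx : IsInfReducedWord (Set.range γ) x) :
    ∃ L : Submodule ℝ (E d), IsLine L ∧
      ∀ v : Submodule ℝ (E d), IsLine v →
        (∀ i, ε ≤ sdist v (repHyp (toEnd (γ i)))) →
        Tendsto (fun n => sdist (Submodule.map (toEnd (wordProd x n)) v) L)
          atTop (nhds 0) := by
  obtain ⟨hε0, hε1⟩ := hε
  by_cases hV : ∃ v₀ : Submodule ℝ (E d), IsLine v₀ ∧ ∀ i, ε ≤ sdist v₀ (repHyp (toEnd (γ i)))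
  · obtain ⟨v₀, hv₀, hv₀V⟩ := hV
    obtain ⟨L, hL, hv₀L⟩ := exists_tendsto_sdist_map_wordProd hε0 hsym hS hε1 hx hv₀ hv₀V
    exact ⟨L, hL, fun v hv hvV =>
      tendsto_sdist_map_wordProd_of_tendsto hε0 hsym hS hε1 hx hv hv₀ hL hvV hv₀V hv₀L⟩
  · obtain ⟨L, hL⟩ := exists_isLine (by omega : 0 < d)
    exact ⟨L, hL, fun v hv hvV => (hV ⟨v, hv, hvV⟩).elim⟩

/-- existence of the limit point `ξ((xᵢ))` of an infinite reduced word. -/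
theorem statement7 (d r : ℕ) (hd : 2 ≤ d) (ε : ℝ) (hε : ε ∈ Set.Ioo (0 : ℝ) 1)
    (γ : Fin (2 * r) → SL d) (hdist : Function.Injective γ)
    (hprox : ∀ i, IsProximal (toEnd (γ i))) (hsym : SymmFam γ)
    (hS : PrimalSchottky ε γ) (hS' : DualSchottky ε γ)
    (x : ℕ → SL d) (hx : IsInfReducedWord (Set.range γ) x) :
    ∃ L : Submodule ℝ (E d), IsLine L ∧
      ∀ v : Submodule ℝ (E d), IsLine v →
        (∀ i, ε ≤ sdist v (repHyp (toEnd (γ i)))) →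
        Tendsto (fun n => sdist (Submodule.map (toEnd (wordProd x n)) v) L)
          atTop (nhds 0) :=
  statement7_general d r hd ε hε γ hsym hS x hx

end Amalgam
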